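/- Barrier computation: Let n ≥ 2, p ∈ (1,∞), γ > 0, c > 0, r₀ > 0 and x₀ ∈ ℝⁿ, and define ψ(x) := c·(r₀^{−γ} − |x − x₀|^{−γ}) for x ∈ ℝⁿ, x ≠ x₀. Then for every x ≠ x₀ one has Δψ(x) + (p−2)·∂ₙₙψ(x) = −(c·γ / |x−x₀|^{γ+4}) · [ (γ − n − p + 4)·|x − x₀|² + (p−2)·(γ+2)·((x−x₀)·eₙ)² ]. Consequently, if either p ≥ 2 and γ > n + p − 4, or 1 < p < 2 and γ > (n−p)/(p−1), then Δψ(x) + (p−2)·∂ₙₙψ(x) < 0 for every x ≠ x₀. -/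

import Mathlib

open Set Filter Metric MeasureTheory Topology
open scoped InnerProductSpace NNReal

noncomputable section

namespace TwoPhaseBernoulli

/-- Euclidean space `ℝⁿ`. -/
abbrev E (n : ℕ) := EuclideanSpace ℝ (Fin n)

/-- the `i`-th standard basis vector of `ℝⁿ` -/
def bVec (n : ℕ) (i : Fin n) : E n := EuclideanSpace.single i 1

/-- the `n`-th standard basis vector `eₙ` of `ℝⁿ` -/
def eVec (n : ℕ) : E n :=
  if h : 0 < n then EuclideanSpace.single ⟨n - 1, Nat.sub_lt h Nat.one_pos⟩ 1 else 0

/-- Hessian of `f` at `x`, as a continuous linear map. -/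
def hess (n : ℕ) (f : E n → ℝ) (x : E n) : E n →L[ℝ] E n :=
  fderiv ℝ (gradient f) x

/-- Laplacian: the trace of the Hessian. -/
def lap (n : ℕ) (f : E n → ℝ) (x : E n) : ℝ :=
  ∑ i : Fin n, ⟪hess n f x (bVec n i), bVec n i⟫_ℝ

/-- second derivative in the direction `eₙ` -/
def dnn (n : ℕ) (f : E n → ℝ) (x : E n) : ℝ := ⟪hess n f x (eVec n), eVec n⟫_ℝ

/-- the linearized operator `L_p = Δ + (p-2)∂ₙₙ` -/
def Lp (n : ℕ) (p : ℝ) (f : E n → ℝ) (x : E n) : ℝ :=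
  lap n f x + (p - 2) * dnn n f x

/-- the classical `p`-Laplacian `div(|∇f|^{p-2}∇f)` evaluated at a point of
nonvanishing gradient, via the formula
`|∇f|^{p-4} (|∇f|² Δf + (p-2) ∇fᵀ D²f ∇f)`. -/
def pLap (n : ℕ) (p : ℝ) (f : E n → ℝ) (x : E n) : ℝ :=
  ‖gradient f x‖ ^ (p - 4) *
    (‖gradient f x‖ ^ 2 * lap n f x
      + (p - 2) * ⟪hess n f x (gradient f x), gradient f x⟫_ℝ)

/-- a continuous linear map `ℝⁿ → ℝⁿ` is symmetric (i.e. a symmetric matrix) -/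
def symCLM (n : ℕ) (M : E n →L[ℝ] E n) : Prop :=
  ∀ x y : E n, ⟪M x, y⟫_ℝ = ⟪x, M y⟫_ℝ

/-- trace of a continuous linear map `ℝⁿ → ℝⁿ` (i.e. of a matrix) -/
def trCLM (n : ℕ) (M : E n →L[ℝ] E n) : ℝ :=
  ∑ i : Fin n, ⟪M (bVec n i), bVec n i⟫_ℝ

/-- `Q` touches `u` from below at `x₀` -/
def TouchesBelow (n : ℕ) (Q u : E n → ℝ) (x₀ : E n) : Prop :=
  Q x₀ = u x₀ ∧ ∀ᶠ x in 𝓝 x₀, Q x ≤ u x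

/-- `Q` touches `u` from above at `x₀` -/
def TouchesAbove (n : ℕ) (Q u : E n → ℝ) (x₀ : E n) : Prop :=
  Q x₀ = u x₀ ∧ ∀ᶠ x in 𝓝 x₀, u x ≤ Q x

/-- positivity set `Ω⁺_u` -/
def posSet (n : ℕ) (u : E n → ℝ) : Set (E n) := {x | 0 < u x}

/-- negativity set `Ω⁻_u` -/
def negSet (n : ℕ) (u : E n → ℝ) : Set (E n) := {x | u x < 0}

/-- two-phase points `Γ_TP(u) = ∂Ω⁺_u ∩ ∂Ω⁻_u ∩ D` -/
def GammaTP (n : ℕ) (D : Set (E n)) (u : E n → ℝ) : Set (E n) :=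
  frontier (posSet n u) ∩ frontier (negSet n u) ∩ D

/-- one-phase positive points `Γ⁺ = (∂Ω⁺_u \ ∂Ω⁻_u) ∩ D` -/
def GammaPlus (n : ℕ) (D : Set (E n)) (u : E n → ℝ) : Set (E n) :=
  (frontier (posSet n u) \ frontier (negSet n u)) ∩ D

/-- one-phase negative points `Γ⁻ = (∂Ω⁻_u \ ∂Ω⁺_u) ∩ D` -/
def GammaMinus (n : ℕ) (D : Set (E n)) (u : E n → ℝ) : Set (E n) :=
  (frontier (negSet n u) \ frontier (posSet n u)) ∩ D

/-- interior two-phase points: `|B_r(x₀) ∩ {u = 0}| = 0` for some `r > 0` -/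
def IntTP (n : ℕ) (D : Set (E n)) (u : E n → ℝ) : Set (E n) :=
  {x ∈ GammaTP n D u | ∃ r > 0, volume (ball x r ∩ {y | u y = 0}) = 0}

/-!
With `ρ = |x - x₀|`, the Hessian of `ψ = c (r₀^{-γ} - ρ^{-γ})` is
`c γ ρ^{-γ-4} (ρ² I - (γ + 2) (x - x₀) ⊗ (x - x₀))`: its trace and its `eₙeₙ` entry give the
formula for `L_p ψ`. The bracket in that formula is affine in `t = ((x - x₀)·eₙ)² ∈ [0, ρ²]`,
so it is positive as soon as it is positive at the endpoint `t = 0` (when `p ≥ 2`) or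
`t = ρ²` (when `p < 2`), which is what the conditions on `γ` say.
-/

section InnerProductSpace

variable {F : Type*} [NormedAddCommGroup F] [InnerProductSpace ℝ F] {x₀ x : F}

theorem hasFDerivAt_norm_sub_rpow (s : ℝ) (hx : x ≠ x₀) :
    HasFDerivAt (fun y => ‖y - x₀‖ ^ s) ((s * ‖x - x₀‖ ^ (s - 2)) • innerSL ℝ (x - x₀)) x := by
  have hρ : 0 < ‖x - x₀‖ := norm_pos_iff.2 (sub_ne_zero.2 hx)
  have hsq : ∀ (y : F) (t : ℝ), (‖y - x₀‖ ^ 2) ^ (t / 2) = ‖y - x₀‖ ^ t := fun y t => by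
    rw [Real.rpow_div_two_eq_sqrt _ (by positivity), Real.sqrt_sq (norm_nonneg _)]
  -- `‖·‖ ^ 2` is smooth everywhere, and `t ↦ t ^ (s / 2)` is smooth away from `0`
  have h := ((hasFDerivAt_id x).sub_const x₀).norm_sq.rpow_const (p := s / 2)
    (Or.inl (by simp only [id]; positivity))
  simp only [id, hsq] at h
  refine h.congr_fderiv ?_
  rw [← hsq x (s - 2)]
  ext v
  simp only [ContinuousLinearMap.comp_id, smul_apply, coe_innerSL_apply, nsmul_eq_mul,
    Nat.cast_ofNat, smul_eq_mul]
  ring_nf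

theorem hasFDerivAt_norm_sub_rpow_smul_sub (s : ℝ) (hx : x ≠ x₀) :
    HasFDerivAt (fun y => ‖y - x₀‖ ^ s • (y - x₀))
      (‖x - x₀‖ ^ s • ContinuousLinearMap.id ℝ F
        + (s * ‖x - x₀‖ ^ (s - 2)) • (innerSL ℝ (x - x₀)).smulRight (x - x₀)) x := by
  have h := (hasFDerivAt_norm_sub_rpow s hx).smul ((hasFDerivAt_id x).sub_const x₀)
  refine h.congr_fderiv ?_
  ext v
  simp [ContinuousLinearMap.smulRight_apply, smul_smul]

variable [CompleteSpace F] (c k γ : ℝ)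

theorem hasGradientAt_barrier (hx : x ≠ x₀) :
    HasGradientAt (fun y => c * (k - ‖y - x₀‖ ^ (-γ)))
      ((c * γ * ‖x - x₀‖ ^ (-γ - 2)) • (x - x₀)) x := by
  rw [hasGradientAt_iff_hasFDerivAt]
  refine (((hasFDerivAt_norm_sub_rpow (-γ) hx).const_sub k).const_mul c).congr_fderiv ?_
  ext v
  simp only [neg_mul, neg_smul, neg_neg, smul_apply, coe_innerSL_apply, smul_eq_mul,
    map_smul, InnerProductSpace.toDual_apply_apply]
  ring

theorem inner_fderiv_gradient_barrier (hx : x ≠ x₀) (v : F) :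
    ⟪fderiv ℝ (gradient fun y => c * (k - ‖y - x₀‖ ^ (-γ))) x v, v⟫_ℝ =
      c * γ * ‖x - x₀‖ ^ (-γ - 2) * ‖v‖ ^ 2
        - c * γ * (γ + 2) * ‖x - x₀‖ ^ (-γ - 4) * ⟪x - x₀, v⟫_ℝ ^ 2 := by
  have hgrad : gradient (fun y => c * (k - ‖y - x₀‖ ^ (-γ)))
      =ᶠ[𝓝 x] fun y => (c * γ) • (‖y - x₀‖ ^ (-γ - 2) • (y - x₀)) := by
    filter_upwards [isOpen_ne.mem_nhds hx] with y hy
    rw [(hasGradientAt_barrier c k γ hy).gradient, smul_smul]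
  rw [hgrad.fderiv_eq, ((hasFDerivAt_norm_sub_rpow_smul_sub (-γ - 2) hx).fun_const_smul _).fderiv]
  simp only [smul_apply, add_apply,
    ContinuousLinearMap.id_apply, ContinuousLinearMap.smulRight_apply, innerSL_apply_apply,
    inner_add_left, real_inner_smul_left, real_inner_self_eq_norm_sq]
  ring_nf

end InnerProductSpace

section EuclideanSpace

variable {n : ℕ}

theorem pos_of_ne {x y : E n} (h : x ≠ y) : 0 < n :=
  Nat.pos_of_ne_zero fun hn => h (by subst hn; exact Subsingleton.elim x y)

theorem norm_eVec (hn : 0 < n) : ‖eVec n‖ = 1 := by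
  simp [eVec, hn]

theorem inner_eVec_sq_le (hn : 0 < n) (w : E n) : ⟪w, eVec n⟫_ℝ ^ 2 ≤ ‖w‖ ^ 2 := by
  have h := abs_real_inner_le_norm w (eVec n)
  rw [norm_eVec hn, mul_one] at h
  exact sq_le_sq' (abs_le.1 h).1 (abs_le.1 h).2

theorem norm_bVec (i : Fin n) : ‖bVec n i‖ = 1 := by
  simp [bVec]

theorem sum_inner_bVec_sq (w : E n) : ∑ i, ⟪w, bVec n i⟫_ℝ ^ 2 = ‖w‖ ^ 2 := by
  simpa [bVec, EuclideanSpace.basisFun_apply] using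
    (EuclideanSpace.basisFun (Fin n) ℝ).sum_sq_inner_left w

variable {f : E n → ℝ} {x w : E n} {a b : ℝ}

theorem lap_eq_of_inner_hess (h : ∀ v, ⟪hess n f x v, v⟫_ℝ = a * ‖v‖ ^ 2 + b * ⟪w, v⟫_ℝ ^ 2) :
    lap n f x = n * a + b * ‖w‖ ^ 2 := by
  simp only [lap, h, norm_bVec, one_pow, mul_one, Finset.sum_add_distrib, ← Finset.mul_sum,
    sum_inner_bVec_sq, Finset.sum_const, Finset.card_univ, Fintype.card_fin, nsmul_eq_mul]

theorem Lp_eq_of_inner_hess (hn : 0 < n) (p : ℝ)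
    (h : ∀ v, ⟪hess n f x v, v⟫_ℝ = a * ‖v‖ ^ 2 + b * ⟪w, v⟫_ℝ ^ 2) :
    Lp n p f x = n * a + b * ‖w‖ ^ 2 + (p - 2) * (a + b * ⟪w, eVec n⟫_ℝ ^ 2) := by
  rw [Lp, lap_eq_of_inner_hess h, dnn, h, norm_eVec hn]
  ring

theorem Lp_barrier (p γ c k : ℝ) {x₀ x : E n} (hx : x ≠ x₀) :
    Lp n p (fun y => c * (k - ‖y - x₀‖ ^ (-γ))) x =
      -(c * γ / ‖x - x₀‖ ^ (γ + 4)) *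
        ((γ - n - p + 4) * ‖x - x₀‖ ^ 2 + (p - 2) * (γ + 2) * ⟪x - x₀, eVec n⟫_ℝ ^ 2) := by
  have hρ : 0 < ‖x - x₀‖ := norm_pos_iff.2 (sub_ne_zero.2 hx)
  have hρ2 : ‖x - x₀‖ ^ (-γ - 2) = ‖x - x₀‖ ^ 2 / ‖x - x₀‖ ^ (γ + 4) := by
    rw [← Real.rpow_two, ← Real.rpow_sub hρ]
    ring_nf
  have hρ4 : ‖x - x₀‖ ^ (-γ - 4) = 1 / ‖x - x₀‖ ^ (γ + 4) := by
    rw [one_div, ← Real.rpow_neg hρ.le]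
    ring_nf
  rw [Lp_eq_of_inner_hess (pos_of_ne hx) p (a := c * γ * ‖x - x₀‖ ^ (-γ - 2))
    (b := -(c * γ * (γ + 2) * ‖x - x₀‖ ^ (-γ - 4))) (w := x - x₀)
    fun v => by rw [hess, inner_fderiv_gradient_barrier c k γ hx]; ring, hρ2, hρ4]
  ring

end EuclideanSpace

theorem barrier_bracket_pos {n p γ ρ t : ℝ} (hp : 1 < p) (hγ : 0 < γ) (hρ : 0 < ρ)
    (ht : t ^ 2 ≤ ρ ^ 2)
    (h : (2 ≤ p ∧ n + p - 4 < γ) ∨ (p < 2 ∧ (n - p) / (p - 1) < γ)) :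
    0 < (γ - n - p + 4) * ρ ^ 2 + (p - 2) * (γ + 2) * t ^ 2 := by
  have hρ2 : 0 < ρ ^ 2 := by positivity
  rcases h with ⟨hp2, hγn⟩ | ⟨hp2, hγn⟩
  · have : 0 ≤ (p - 2) * (γ + 2) * t ^ 2 := by
      have : 0 ≤ p - 2 := by linarith
      positivity
    nlinarith
  · -- for `p < 2` the bracket decreases in `t ^ 2`; at `t ^ 2 = ρ ^ 2` it is
    -- `((p - 1) γ + p - n) ρ ^ 2`
    have hγn' : n - p < γ * (p - 1) := (div_lt_iff₀ (by linarith)).1 hγn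
    have : 0 ≤ (2 - p) * (γ + 2) * (ρ ^ 2 - t ^ 2) :=
      mul_nonneg (mul_nonneg (by linarith) (by linarith)) (by linarith)
    nlinarith

theorem barrier_computation_general
    (n : ℕ) (p γ c r₀ : ℝ) (hp1 : 1 < p)
    (hγ : 0 < γ) (hc : 0 < c) (x₀ : E n) :
    (∀ x : E n, x ≠ x₀ →
      Lp n p (fun y => c * (r₀ ^ (-γ) - ‖y - x₀‖ ^ (-γ))) x =
        -(c * γ / ‖x - x₀‖ ^ (γ + 4)) *
          ((γ - n - p + 4) * ‖x - x₀‖ ^ 2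
            + (p - 2) * (γ + 2) * ⟪x - x₀, eVec n⟫_ℝ ^ 2)) ∧
    (((2 ≤ p ∧ (n : ℝ) + p - 4 < γ) ∨ (p < 2 ∧ ((n : ℝ) - p) / (p - 1) < γ)) →
      ∀ x : E n, x ≠ x₀ →
        Lp n p (fun y => c * (r₀ ^ (-γ) - ‖y - x₀‖ ^ (-γ))) x < 0) := by
  refine ⟨fun x hx => Lp_barrier p γ c _ hx, fun hγp x hx => ?_⟩
  have hρ : 0 < ‖x - x₀‖ := norm_pos_iff.2 (sub_ne_zero.2 hx)
  rw [Lp_barrier p γ c _ hx, neg_mul, neg_lt_zero]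
  exact mul_pos (by positivity)
    (barrier_bracket_pos hp1 hγ hρ (inner_eVec_sq_le (pos_of_ne hx) _) hγp)

/-- **Barrier computation**: the explicit value of `L_p ψ = Δψ + (p−2)∂ₙₙψ` for the
radial barrier `ψ(x) = c (r₀^{−γ} − |x−x₀|^{−γ})`, and its strict negativity for a
suitable choice of `γ`. -/
theorem barrier_computation
    (n : ℕ) (hn : 2 ≤ n) (p γ c r₀ : ℝ) (hp1 : 1 < p)
    (hγ : 0 < γ) (hc : 0 < c) (hr : 0 < r₀) (x₀ : E n) :
    (∀ x : E n, x ≠ x₀ →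
      Lp n p (fun y => c * (r₀ ^ (-γ) - ‖y - x₀‖ ^ (-γ))) x =
        -(c * γ / ‖x - x₀‖ ^ (γ + 4)) *
          ((γ - n - p + 4) * ‖x - x₀‖ ^ 2
            + (p - 2) * (γ + 2) * ⟪x - x₀, eVec n⟫_ℝ ^ 2)) ∧
    (((2 ≤ p ∧ (n : ℝ) + p - 4 < γ) ∨ (p < 2 ∧ ((n : ℝ) - p) / (p - 1) < γ)) →
      ∀ x : E n, x ≠ x₀ →
        Lp n p (fun y => c * (r₀ ^ (-γ) - ‖y - x₀‖ ^ (-γ))) x < 0) :=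
  barrier_computation_general n p γ c r₀ hp1 hγ hc x₀
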